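/- arXiv:2005.08243 — 2 statements merged into one kernel-verified Lean document; each statement's English description precedes it below -/
import Mathlib

section
/- Let G be a finite connected simple graph with at least one edge, let σ be a rotation system on G, and let v be a vertex of G of degree d = deg(v). Let t_v : {1, …, d} → ℕ be a nondecreasing enumeration of the multiset {f_w(e) : e a dart with initial vertex v}, and let w_v : {1, …, d} → ℕ be a nondecreasing enumeration of the multiset {max(f_w(d₁), f_w(d₂)) : (d₁, d₂) an angle with central vertex v}. Then w_v[i] ≥ t_v[i+1] for all 1 ≤ i < d. -/
namespace Genus

open SimpleGraph

variable {V : Type*} (G : SimpleGraph V)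

/-- The dart-reversal involution, as a permutation of the darts. -/
def dartRev : Equiv.Perm G.Dart where
  toFun d := d.symm
  invFun d := d.symm
  left_inv d := d.symm_symm
  right_inv d := d.symm_symm

/-- A rotation system on `G`: a permutation of the darts sending each dart to a dart
with the same initial vertex, whose restriction to the darts leaving any fixed vertex
is a single cycle (equivalently, acts transitively on them). -/
def IsRotationSystem (σ : Equiv.Perm G.Dart) : Prop :=
  (∀ d : G.Dart, (σ d).fst = d.fst) ∧
    ∀ d d' : G.Dart, d.fst = d'.fst → ∃ n : ℕ, (σ ^ n) d = d'

/-- The face permutation `φ(d) = σ(d̄)` of the embedding `(G, σ)`. -/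
def facePerm (σ : Equiv.Perm G.Dart) : Equiv.Perm G.Dart := σ * dartRev G

/-- Two darts are equivalent iff they lie in the same face (same orbit of `φ`). -/
def faceSetoid (σ : Equiv.Perm G.Dart) : Setoid G.Dart :=
  ⟨(facePerm G σ).SameCycle,
    ⟨fun x => Equiv.Perm.SameCycle.refl _ x, fun h => h.symm, fun h h' => h.trans h'⟩⟩

/-- The number of faces of the embedding `(G, σ)`: the number of orbits of the
face permutation on the darts. -/
noncomputable def numFaces (σ : Equiv.Perm G.Dart) : ℕ :=
  Nat.card (Quotient (faceSetoid G σ))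

/-- `faceSize G σ e` is `f(e)`, the number of darts in the face containing `e`. -/
noncomputable def faceSize (σ : Equiv.Perm G.Dart) (e : G.Dart) : ℕ :=
  Nat.card {d : G.Dart // (facePerm G σ).SameCycle e d}

/-- The genus `1 + (|E| - |V| - |F|)/2` of the embedding `(G, σ)`. -/
noncomputable def embGenus [Fintype V] (σ : Equiv.Perm G.Dart) : ℚ :=
  1 + ((Nat.card G.edgeSet : ℚ) - (Nat.card V : ℚ) - (numFaces G σ : ℚ)) / 2

/-- The set of genera of all embeddings of `G`; the genus of `G` is its minimum. -/
def genusSet [Fintype V] : Set ℚ :=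
  {g : ℚ | ∃ σ : Equiv.Perm G.Dart, IsRotationSystem G σ ∧ embGenus G σ = g}

/-- A facial-like walk: a cyclic sequence of `k` pairwise distinct darts such that each dart
starts at the end vertex of the previous one, and a dart is followed by its reverse
iff its end vertex has degree 1. -/
def IsFacialLikeWalk [Fintype V] [DecidableRel G.Adj] {k : ℕ} (w : Fin k → G.Dart) : Prop :=
  ∃ hk : 0 < k, Function.Injective w ∧
    ∀ i : Fin k,
      (w ⟨(i + 1) % k, Nat.mod_lt _ hk⟩).fst = (w i).snd ∧
        (w ⟨(i + 1) % k, Nat.mod_lt _ hk⟩ = (w i).symm ↔ G.degree (w i).snd = 1)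

/-- `fw G e` is `f_w(e)`, the length of a shortest facial-like walk containing the dart `e`. -/
noncomputable def fw [Fintype V] [DecidableRel G.Adj] (e : G.Dart) : ℕ :=
  sInf {k : ℕ | ∃ w : Fin k → G.Dart, IsFacialLikeWalk G w ∧ ∃ i, w i = e}

end Genus

open SimpleGraph in
private lemma facial_set_symm {V : Type*} [Fintype V] (G : SimpleGraph V) [DecidableRel G.Adj]
    (e : G.Dart) {k : ℕ}
    (h : ∃ w : Fin k → G.Dart, Genus.IsFacialLikeWalk G w ∧ ∃ i, w i = e) :
    ∃ w : Fin k → G.Dart, Genus.IsFacialLikeWalk G w ∧ ∃ i, w i = e.symm := by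
  obtain ⟨w, ⟨hk, hinj, hcond⟩, i0, hi0⟩ := h
  have key : ∀ m : ℕ, m < k → ((k - 1 - ((m + 1) % k)) + 1) % k = k - 1 - m := by
    intro m hm
    rcases Nat.lt_or_ge (m + 1) k with h' | h'
    · rw [Nat.mod_eq_of_lt h', Nat.mod_eq_of_lt (by omega)]
      omega
    · have hm1 : m + 1 = k := by omega
      have h0 : (m + 1) % k = 0 := by rw [hm1, Nat.mod_self]
      rw [h0]
      have h1 : k - 1 - 0 + 1 = k := by omega
      rw [h1, Nat.mod_self]
      omega
  refine ⟨fun j => (w ⟨k - 1 - j.val, by have := j.isLt; omega⟩).symm, ⟨hk, ?_, ?_⟩, ?_⟩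
  · intro j1 j2 hj
    have := hinj (SimpleGraph.Dart.symm_involutive.injective hj)
    have h1 := j1.isLt
    have h2 := j2.isLt
    have := congrArg Fin.val this
    simp only at this
    exact Fin.ext (by omega)
  · intro i
    have hik := i.isLt
    have hlt1 : ((i : ℕ) + 1) % k < k := Nat.mod_lt _ hk
    have h1 : k - 1 - (((i : ℕ) + 1) % k) < k := by omega
    have h2 : k - 1 - (i : ℕ) < k := by omega
    have hidx : (⟨(((⟨k - 1 - (((i : ℕ) + 1) % k), h1⟩ : Fin k) : ℕ) + 1) % k,
        Nat.mod_lt _ hk⟩ : Fin k) = ⟨k - 1 - (i : ℕ), h2⟩ := Fin.ext (key (i : ℕ) hik)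
    obtain ⟨c1, c2⟩ := hcond ⟨k - 1 - (((i : ℕ) + 1) % k), h1⟩
    rw [hidx] at c1 c2
    constructor
    · exact c1.symm
    · show (w ⟨k - 1 - (((i : ℕ) + 1) % k), h1⟩).symm
          = (w ⟨k - 1 - (i : ℕ), h2⟩).symm.symm
        ↔ G.degree (w ⟨k - 1 - (i : ℕ), h2⟩).fst = 1
      rw [SimpleGraph.Dart.symm_symm, c1, eq_comm]
      exact c2
  · have hi0k := i0.isLt
    refine ⟨⟨k - 1 - (i0 : ℕ), by omega⟩, ?_⟩
    show (w ⟨k - 1 - (k - 1 - (i0 : ℕ)), _⟩).symm = e.symm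
    have : (⟨k - 1 - (k - 1 - (i0 : ℕ)), by omega⟩ : Fin k) = i0 := Fin.ext (by
      show k - 1 - (k - 1 - (i0 : ℕ)) = (i0 : ℕ); omega)
    rw [this, hi0]

open SimpleGraph in
private lemma fw_symm {V : Type*} [Fintype V] (G : SimpleGraph V) [DecidableRel G.Adj]
    (e : G.Dart) : Genus.fw G e.symm = Genus.fw G e := by
  unfold Genus.fw
  congr 1
  ext k
  constructor
  · intro h
    simpa [SimpleGraph.Dart.symm_symm] using facial_set_symm G e.symm h
  · intro h
    exact facial_set_symm G e h

open SimpleGraph in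
/-- Let `v` have degree `d`, let `t` be a nondecreasing enumeration (indexed by
`{1, …, d}`) of the multiset `{f_w(e) : e a dart with initial vertex v}`, and let `w` be a
nondecreasing enumeration of the multiset
`{max (f_w d₁) (f_w d₂) : (d₁, d₂) an angle with central vertex v}` (an angle with central
vertex `v` is a pair `(e, φ(e))` with `e.snd = v`). Then `w[i] ≥ t[i+1]` for `1 ≤ i < d`. -/
theorem angle_enum_ge_dart_enum
    {V : Type*} [Fintype V] [DecidableEq V] (G : SimpleGraph V) [DecidableRel G.Adj]
    (hconn : G.Connected) (hE : G.edgeSet.Nonempty)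
    (σ : Equiv.Perm G.Dart) (hσ : Genus.IsRotationSystem G σ) (v : V)
    (t w : ℕ → ℕ)
    (ht_mono : MonotoneOn t (Set.Icc 1 (G.degree v)))
    (ht_enum : (Finset.Icc 1 (G.degree v)).val.map t =
      (Finset.univ.filter (fun e : G.Dart => e.fst = v)).val.map (Genus.fw G))
    (hw_mono : MonotoneOn w (Set.Icc 1 (G.degree v)))
    (hw_enum : (Finset.Icc 1 (G.degree v)).val.map w =
      (Finset.univ.filter (fun e : G.Dart => e.snd = v)).val.map
        (fun e => max (Genus.fw G e) (Genus.fw G (Genus.facePerm G σ e)))) :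
    ∀ i : ℕ, 1 ≤ i → i < G.degree v → t (i + 1) ≤ w i := by
  classical
  intro i hi1 hid
  by_contra hlt
  push_neg at hlt
  set c := t (i + 1) with hc
  -- the two "count below c" identities coming from the enumerations
  set S : Finset G.Dart :=
    Finset.univ.filter (fun e : G.Dart => e.fst = v ∧ Genus.fw G e < c) with hS
  set T : Finset G.Dart :=
    Finset.univ.filter (fun e : G.Dart => e.snd = v ∧
      max (Genus.fw G e) (Genus.fw G (Genus.facePerm G σ e)) < c) with hT
  have hface : ∀ e : G.Dart, Genus.facePerm G σ e = σ e.symm := fun e => rfl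
  have hScount : ((Finset.Icc 1 (G.degree v)).filter (fun j => t j < c)).card = S.card := by
    have h := congrArg (Multiset.countP (fun n => n < c)) ht_enum
    rw [Multiset.countP_map, Multiset.countP_map] at h
    rw [hS, ← Finset.filter_filter]
    rw [Finset.card_def, Finset.card_def, Finset.filter_val, Finset.filter_val]
    convert h using 2
  have hTcount : ((Finset.Icc 1 (G.degree v)).filter (fun j => w j < c)).card = T.card := by
    have h := congrArg (Multiset.countP (fun n => n < c)) hw_enum
    rw [Multiset.countP_map, Multiset.countP_map] at h
    rw [hT, ← Finset.filter_filter]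
    rw [Finset.card_def, Finset.card_def, Finset.filter_val, Finset.filter_val]
    convert h using 2
  have hA : ((Finset.Icc 1 (G.degree v)).filter (fun j => t j < c)).card ≤ i := by
    have hsub : (Finset.Icc 1 (G.degree v)).filter (fun j => t j < c) ⊆ Finset.Icc 1 i := by
      intro j hj
      simp only [Finset.mem_filter, Finset.mem_Icc] at hj ⊢
      refine ⟨hj.1.1, ?_⟩
      by_contra hji
      push_neg at hji
      have h5 : t (i + 1) ≤ t j := ht_mono (Set.mem_Icc.mpr ⟨by omega, by omega⟩)
        (Set.mem_Icc.mpr ⟨hj.1.1, hj.1.2⟩) (by omega)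
      omega
    calc ((Finset.Icc 1 (G.degree v)).filter (fun j => t j < c)).card
        ≤ (Finset.Icc 1 i).card := Finset.card_le_card hsub
      _ = i := by rw [Nat.card_Icc]; omega
  have hB : i ≤ ((Finset.Icc 1 (G.degree v)).filter (fun j => w j < c)).card := by
    have hsub : Finset.Icc 1 i ⊆ (Finset.Icc 1 (G.degree v)).filter (fun j => w j < c) := by
      intro j hj
      simp only [Finset.mem_Icc] at hj
      simp only [Finset.mem_filter, Finset.mem_Icc]
      refine ⟨⟨hj.1, by omega⟩, ?_⟩
      have h5 : w j ≤ w i := hw_mono (Set.mem_Icc.mpr ⟨hj.1, by omega⟩)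
        (Set.mem_Icc.mpr ⟨hi1, le_of_lt hid⟩) hj.2
      omega
    calc i = (Finset.Icc 1 i).card := by rw [Nat.card_Icc]; omega
      _ ≤ _ := Finset.card_le_card hsub
  have hSi : S.card ≤ i := hScount ▸ hA
  have hTi : i ≤ T.card := hTcount ▸ hB
  -- φ maps T injectively into S
  have hφmem : ∀ e ∈ T, Genus.facePerm G σ e ∈ S := by
    intro e he
    rw [hT, Finset.mem_filter] at he
    rw [hS, Finset.mem_filter]
    refine ⟨Finset.mem_univ _, ?_, ?_⟩
    · rw [hface]
      have h1 : (σ e.symm).fst = e.symm.fst := hσ.1 e.symm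
      rw [h1]
      exact he.2.1
    · exact lt_of_le_of_lt (le_max_right _ _) he.2.2
  have hTS : T.card ≤ S.card := by
    apply Finset.card_le_card_of_injOn (Genus.facePerm G σ) hφmem
    intro a _ b _ hab
    exact (Genus.facePerm G σ).injective hab
  -- symm maps T injectively into S
  have hsymmem : ∀ e ∈ T, e.symm ∈ S := by
    intro e he
    rw [hT, Finset.mem_filter] at he
    rw [hS, Finset.mem_filter]
    refine ⟨Finset.mem_univ _, he.2.1, ?_⟩
    rw [fw_symm]
    exact lt_of_le_of_lt (le_max_left _ _) he.2.2
  have himgsub : T.image (fun e : G.Dart => e.symm) ⊆ S := by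
    intro s hs
    obtain ⟨e, heT, rfl⟩ := Finset.mem_image.mp hs
    exact hsymmem e heT
  have himgcard : (T.image (fun e : G.Dart => e.symm)).card = T.card :=
    Finset.card_image_of_injective T (SimpleGraph.Dart.symm_involutive.injective)
  have himg : T.image (fun e : G.Dart => e.symm) = S :=
    Finset.eq_of_subset_of_card_le himgsub (by omega)
  -- S is σ-invariant
  have hinv : ∀ s ∈ S, σ s ∈ S := by
    intro s hs
    rw [← himg] at hs
    obtain ⟨e, heT, rfl⟩ := Finset.mem_image.mp hs
    have := hφmem e heT
    rwa [hface] at this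
  -- S is nonempty
  obtain ⟨s₀, hs₀⟩ : S.Nonempty := Finset.card_pos.mp (by omega)
  have hs₀fst : s₀.fst = v := by
    rw [hS, Finset.mem_filter] at hs₀
    exact hs₀.2.1
  have hpow : ∀ n : ℕ, (σ ^ n) s₀ ∈ S := by
    intro n
    induction n with
    | zero => simpa using hs₀
    | succ n ih =>
      rw [pow_succ', Equiv.Perm.mul_apply]
      exact hinv _ ih
  have hall : Finset.univ.filter (fun e : G.Dart => e.fst = v) ⊆ S := by
    intro d' hd'
    simp only [Finset.mem_filter, Finset.mem_univ, true_and] at hd'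
    obtain ⟨n, hn⟩ := hσ.2 s₀ d' (hs₀fst.trans hd'.symm)
    rw [← hn]
    exact hpow n
  have hdeg : G.degree v ≤ S.card := by
    rw [← SimpleGraph.dart_fst_fiber_card_eq_degree G v]
    exact Finset.card_le_card hall
  omega
end

section
/- (Remark 1) Let G be a finite connected simple graph with at least one edge, let σ be a rotation system on G, and let v be a vertex of G of degree d = deg(v). Let u_v : {1, …, d} → ℕ be a nondecreasing enumeration of the multiset {f(α) : α ∈ A(v)}, let t_v : {1, …, d} → ℕ be a nondecreasing enumeration of the multiset {f_w(e) : e a dart with initial vertex v}, and define s₂ : {1, …, d} → ℕ by s₂[i] = t_v[i+1] for 1 ≤ i < d and s₂[d] = t_v[d]. Then s₂[i] ≤ u_v[i] for all 1 ≤ i ≤ d. -/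
/-!
Fix `i` and put `c = u[i]`; then at least `i` darts `e` ending at `v` lie in faces of size
at most `c`. For each such `e`, both `ē` and `φ(e) = σ(ē)` leave `v` and lie on a facial-like
walk of length `f(e)`: the face of `e` itself, and that face read backwards, which is a face of
the mirror embedding `(G, σ⁻¹)`. Since `σ` permutes the darts leaving `v` in a single cycle,
the set `A` of the reversed darts `ē` is either all of them or grows strictly under
`A ↦ A ∪ σ(A)`. Hence at least `min(i + 1, d)` darts leaving `v` have `f_w ≤ c`, that is,
`t[min(i + 1, d)] ≤ c`, which is `s₂[i] ≤ u[i]`.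
-/

open Function Equiv Finset

theorem Equiv.Perm.minimalPeriod_le_card_sameCycle {α : Type*} [Finite α] {f : Perm α}
    {x y : α} (h : f.SameCycle x y) : minimalPeriod f y ≤ Nat.card {z // f.SameCycle x z} := by
  have hinj : Injective fun j : Fin (minimalPeriod f y) =>
      (⟨(f ^ (j : ℕ)) y, Perm.sameCycle_pow_right.2 h⟩ : {z // f.SameCycle x z}) :=
    fun a b hab => Fin.ext <|
      iterate_injOn_Iio_minimalPeriod a.isLt b.isLt (congrArg Subtype.val hab)
  simpa using Nat.card_le_card_of_injective _ hinj

theorem Finset.min_card_add_one_le_card_union_image {α : Type*} [DecidableEq α] (f : Perm α)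
    {s T : Finset α} {x : α} (hx : x ∈ s) (hT : ∀ y ∈ T, ∃ n : ℕ, (f ^ n) x = y) :
    min (#s + 1) #T ≤ #(s ∪ s.image f) := by
  rcases Nat.lt_or_ge #s #(s ∪ s.image f) with hlt | hge
  · exact (min_le_left _ _).trans hlt
  have hclosed : Set.MapsTo f s s := by
    intro y hy
    rw [mem_coe, eq_of_subset_of_card_le subset_union_left hge]
    exact mem_union_right _ (mem_image_of_mem f hy)
  have hTs : T ⊆ s := by
    intro y hy
    obtain ⟨n, rfl⟩ := hT y hy
    exact hclosed.iterate n hx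
  exact (min_le_right _ _).trans ((card_le_card hTs).trans (card_le_card subset_union_left))

theorem Finset.card_filter_eq_of_map_val_eq {ι κ β : Type*} {s : Finset ι} {t : Finset κ}
    {f : ι → β} {g : κ → β} (h : s.val.map f = t.val.map g) (p : β → Prop)
    [DecidablePred p] :
    #(s.filter fun i => p (f i)) = #(t.filter fun k => p (g k)) := by
  have := congrArg (Multiset.countP p) h
  rwa [Multiset.countP_map, Multiset.countP_map] at this

theorem MonotoneOn.le_card_filter_apply_le {α : Type*} [Preorder α] [DecidableLE α]
    {u : ℕ → α} {n i : ℕ} (hu : MonotoneOn u (Set.Icc 1 n)) (hi : 1 ≤ i) (hin : i ≤ n) :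
    i ≤ #((Icc 1 n).filter fun j => u j ≤ u i) := by
  calc i = #(Icc 1 i) := by simp
    _ ≤ _ := card_le_card fun j hj => by
      simp only [mem_Icc, mem_filter] at hj ⊢
      exact ⟨⟨hj.1, hj.2.trans hin⟩, hu ⟨hj.1, hj.2.trans hin⟩ ⟨hi, hin⟩ hj.2⟩

theorem MonotoneOn.apply_le_of_le_card_filter {α : Type*} [Preorder α] [DecidableLE α]
    {t : ℕ → α} {n m : ℕ} {c : α} (ht : MonotoneOn t (Set.Icc 1 n)) (hm : 1 ≤ m)
    (h : m ≤ #((Icc 1 n).filter fun j => t j ≤ c)) : t m ≤ c := by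
  by_contra hc
  have hsub : (Icc 1 n).filter (fun j => t j ≤ c) ⊆ Icc 1 (m - 1) := fun j hj => by
    simp only [mem_Icc, mem_filter] at hj ⊢
    refine ⟨hj.1.1, Nat.le_sub_one_of_lt (lt_of_not_ge fun hmj => hc ?_)⟩
    exact (ht ⟨hm, hmj.trans hj.1.2⟩ hj.1 hmj).trans hj.2
  have := card_le_card hsub
  simp only [Nat.card_Icc] at this
  omega

namespace Genus

open SimpleGraph

variable {V : Type*} {G : SimpleGraph V} {σ : Perm G.Dart}

theorem IsRotationSystem.inv (hσ : IsRotationSystem G σ) : IsRotationSystem G σ⁻¹ := by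
  refine ⟨fun d => ?_, fun d d' h => ?_⟩
  · simpa using (hσ.1 (σ⁻¹ d)).symm
  · obtain ⟨n, hn⟩ := hσ.2 d' d h.symm
    exact ⟨n, by rw [inv_pow, Perm.inv_eq_iff_eq, hn]⟩

theorem facePerm_apply_fst (hσ : IsRotationSystem G σ) (d : G.Dart) :
    (facePerm G σ d).fst = d.snd :=
  hσ.1 d.symm

theorem faceSize_inv_symm (e : G.Dart) : faceSize G σ⁻¹ e.symm = faceSize G σ e := by
  have hconj : facePerm G σ⁻¹ = dartRev G * (facePerm G σ)⁻¹ * (dartRev G)⁻¹ :=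
    Equiv.ext fun _ => rfl
  refine Nat.card_congr ((Equiv.subtypeEquivRight fun d => ?_).trans
    ((dartRev G).subtypeEquiv fun d => Iff.rfl))
  rw [hconj, Perm.sameCycle_conj, Perm.sameCycle_inv]
  rfl

variable [Fintype V] [DecidableEq V] [DecidableRel G.Adj]

theorem IsRotationSystem.apply_eq_self_iff (hσ : IsRotationSystem G σ) (d : G.Dart) :
    σ d = d ↔ G.degree d.fst = 1 := by
  have hd : d ∈ ({d' : G.Dart | d'.fst = d.fst} : Finset _) := by simp
  rw [← G.dart_fst_fiber_card_eq_degree, card_eq_one]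
  constructor
  · intro h
    refine ⟨d, eq_singleton_iff_unique_mem.2 ⟨hd, fun d' hd' => ?_⟩⟩
    obtain ⟨n, rfl⟩ := hσ.2 d d' (mem_filter.1 hd').2.symm
    exact Perm.pow_apply_eq_self_of_apply_eq_self h n
  · rintro ⟨x, hx⟩
    have hσd : σ d ∈ ({d' : G.Dart | d'.fst = d.fst} : Finset _) := by simp [hσ.1 d]
    rw [hx, mem_singleton] at hd hσd
    rw [hσd, hd]

theorem facePerm_apply_eq_symm_iff (hσ : IsRotationSystem G σ) (d : G.Dart) :
    facePerm G σ d = d.symm ↔ G.degree d.snd = 1 :=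
  hσ.apply_eq_self_iff d.symm

theorem isFacialLikeWalk_iterate_facePerm (hσ : IsRotationSystem G σ) (d : G.Dart) :
    IsFacialLikeWalk G fun j : Fin (minimalPeriod (facePerm G σ) d) =>
      (facePerm G σ)^[j] d := by
  have hpos := minimalPeriod_pos_of_mem_periodicPts ((facePerm G σ).injective.mem_periodicPts d)
  refine ⟨hpos, fun a b hab => Fin.ext (iterate_injOn_Iio_minimalPeriod a.isLt b.isLt hab),
    fun i => ?_⟩
  simp only [iterate_mod_minimalPeriod_eq, iterate_succ_apply']
  exact ⟨facePerm_apply_fst hσ _, facePerm_apply_eq_symm_iff hσ _⟩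

theorem fw_le_faceSize (hσ : IsRotationSystem G σ) {e d : G.Dart}
    (h : (facePerm G σ).SameCycle e d) : fw G d ≤ faceSize G σ e :=
  have hwalk := isFacialLikeWalk_iterate_facePerm hσ d
  calc fw G d ≤ minimalPeriod (facePerm G σ) d :=
        Nat.sInf_le ⟨_, hwalk, ⟨0, hwalk.1⟩, rfl⟩
    _ ≤ faceSize G σ e := Perm.minimalPeriod_le_card_sameCycle h

theorem fw_symm_le_faceSize (hσ : IsRotationSystem G σ) (e : G.Dart) :
    fw G e.symm ≤ faceSize G σ e :=
  faceSize_inv_symm (σ := σ) e ▸ fw_le_faceSize hσ.inv (Perm.SameCycle.refl _ _)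

theorem min_card_add_one_degree_le_card_filter_fw_le (hσ : IsRotationSystem G σ) {v : V} {c : ℕ}
    {S : Finset G.Dart} (hS : ∀ e ∈ S, e.snd = v ∧ faceSize G σ e ≤ c) (hne : S.Nonempty) :
    min (#S + 1) (G.degree v) ≤
      #((univ.filter fun e : G.Dart => e.fst = v).filter fun e => fw G e ≤ c) := by
  set A := S.image Dart.symm
  have hAF : A ∪ A.image σ ⊆
      (univ.filter fun e : G.Dart => e.fst = v).filter fun e => fw G e ≤ c := by
    simp only [A, union_subset_iff, image_subset_iff, forall_mem_image, mem_filter, mem_univ,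
      true_and]
    refine ⟨fun e he => ⟨?_, ?_⟩, fun e he => ⟨?_, ?_⟩⟩
    · exact (hS e he).1
    · exact (fw_symm_le_faceSize hσ e).trans (hS e he).2
    · exact (facePerm_apply_fst hσ e).trans (hS e he).1
    · exact (fw_le_faceSize hσ (Perm.sameCycle_apply_right.2 (.refl _ _))).trans (hS e he).2
  obtain ⟨e, he⟩ := hne
  calc min (#S + 1) (G.degree v) = min (#A + 1) #{d : G.Dart | d.fst = v} := by
        rw [card_image_of_injective _ Dart.symm_involutive.injective,
          G.dart_fst_fiber_card_eq_degree]
    _ ≤ #(A ∪ A.image σ) := by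
        refine min_card_add_one_le_card_union_image σ (mem_image_of_mem _ he) fun d hd => ?_
        exact hσ.2 _ _ ((hS e he).1.trans (mem_filter.1 hd).2.symm)
    _ ≤ _ := card_le_card hAF

end Genus

open SimpleGraph in
theorem remark1_s2_dominated_general
    {V : Type*} [Fintype V] [DecidableEq V] (G : SimpleGraph V) [DecidableRel G.Adj]
    (σ : Equiv.Perm G.Dart) (hσ : Genus.IsRotationSystem G σ) (v : V)
    (u t s₂ : ℕ → ℕ)
    (hu_mono : MonotoneOn u (Set.Icc 1 (G.degree v)))
    (hu_enum : (Finset.Icc 1 (G.degree v)).val.map u =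
      (Finset.univ.filter (fun e : G.Dart => e.snd = v)).val.map
        (fun e => Genus.faceSize G σ e))
    (ht_mono : MonotoneOn t (Set.Icc 1 (G.degree v)))
    (ht_enum : (Finset.Icc 1 (G.degree v)).val.map t =
      (Finset.univ.filter (fun e : G.Dart => e.fst = v)).val.map (Genus.fw G))
    (hs₂ : ∀ i : ℕ, 1 ≤ i → i < G.degree v → s₂ i = t (i + 1))
    (hs₂d : s₂ (G.degree v) = t (G.degree v)) :
    ∀ i : ℕ, 1 ≤ i → i ≤ G.degree v → s₂ i ≤ u i := by
  intro i hi hid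
  have hS : i ≤ #((univ.filter fun e : G.Dart => e.snd = v).filter
      fun e => Genus.faceSize G σ e ≤ u i) :=
    card_filter_eq_of_map_val_eq hu_enum (· ≤ u i) ▸ hu_mono.le_card_filter_apply_le hi hid
  have hF : min (i + 1) (G.degree v) ≤ #((Icc 1 (G.degree v)).filter fun j => t j ≤ u i) := by
    rw [card_filter_eq_of_map_val_eq ht_enum (· ≤ u i)]
    exact (min_le_min_right _ (by omega)).trans
      (Genus.min_card_add_one_degree_le_card_filter_fw_le hσ (by simp) (card_pos.1 (hi.trans hS)))
  have ht := ht_mono.apply_le_of_le_card_filter (by omega) hF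
  rcases hid.lt_or_eq with hlt | rfl
  · rw [hs₂ i hi hlt]
    rwa [min_eq_left hlt] at ht
  · rw [hs₂d]
    rwa [min_eq_right (Nat.le_succ _)] at ht

open SimpleGraph in
/-- Remark 1: Let `v` have degree `d`, let `u` be a nondecreasing enumeration
(indexed by `{1, …, d}`) of the multiset `{f(α) : α ∈ A(v)}` (an angle `α ∈ A(v)` is a pair
`(e, φ(e))` with `e.snd = v`, and `f(α)` is the number of darts of the face containing the
darts of `α`), let `t` be a nondecreasing enumeration of the multiset
`{f_w(e) : e a dart with initial vertex v}`, and define `s₂` by `s₂[i] = t[i+1]` for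
`1 ≤ i < d` and `s₂[d] = t[d]`. Then `s₂[i] ≤ u[i]` for all `1 ≤ i ≤ d`. -/
theorem remark1_s2_dominated
    {V : Type*} [Fintype V] [DecidableEq V] (G : SimpleGraph V) [DecidableRel G.Adj]
    (hconn : G.Connected) (hE : G.edgeSet.Nonempty)
    (σ : Equiv.Perm G.Dart) (hσ : Genus.IsRotationSystem G σ) (v : V)
    (u t s₂ : ℕ → ℕ)
    (hu_mono : MonotoneOn u (Set.Icc 1 (G.degree v)))
    (hu_enum : (Finset.Icc 1 (G.degree v)).val.map u =
      (Finset.univ.filter (fun e : G.Dart => e.snd = v)).val.map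
        (fun e => Genus.faceSize G σ e))
    (ht_mono : MonotoneOn t (Set.Icc 1 (G.degree v)))
    (ht_enum : (Finset.Icc 1 (G.degree v)).val.map t =
      (Finset.univ.filter (fun e : G.Dart => e.fst = v)).val.map (Genus.fw G))
    (hs₂ : ∀ i : ℕ, 1 ≤ i → i < G.degree v → s₂ i = t (i + 1))
    (hs₂d : s₂ (G.degree v) = t (G.degree v)) :
    ∀ i : ℕ, 1 ≤ i → i ≤ G.degree v → s₂ i ≤ u i :=
  remark1_s2_dominated_general G σ hσ v u t s₂ hu_mono hu_enum ht_mono ht_enum hs₂ hs₂d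
end
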